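/- For countable groups, the following are equivalent: (i) G is finitely generated; (ii) G is SB-generated; (iii) G has uncountable cofinality. -/
import Mathlib


open Pointwise

/-- `d` is a left-invariant metric on the group `G`. -/
def IsLeftInvMetric {G : Type*} [Group G] (d : G → G → ℝ) : Prop :=
  (∀ x y, d x y = 0 ↔ x = y) ∧ (∀ x y, d x y = d y x) ∧
    (∀ x y z, d x z ≤ d x y + d y z) ∧ (∀ k x y, d (k * x) (k * y) = d x y)

/-- `d` is a left-invariant pseudo-metric on the group `G`. -/
def IsLeftInvPseudoMetric {G : Type*} [Group G] (d : G → G → ℝ) : Prop :=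
  (∀ x, d x x = 0) ∧ (∀ x y, d x y = d y x) ∧
    (∀ x y z, d x z ≤ d x y + d y z) ∧ (∀ k x y, d (k * x) (k * y) = d x y)

/-- A subset of a group is strongly bounded if it has finite diameter in every
left-invariant metric on the group. -/
def StronglyBounded {G : Type*} [Group G] (A : Set G) : Prop :=
  ∀ d : G → G → ℝ, IsLeftInvMetric d → ∃ D : ℝ, ∀ a ∈ A, ∀ b ∈ A, d a b ≤ D

/-- The word length of `g` with respect to `S`: the least `n` with `g ∈ S^n`. -/
noncomputable def wordLength {G : Type*} [Group G] (S : Set G) (g : G) : ℕ :=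
  sInf {n : ℕ | g ∈ S ^ n}

/-- The word metric associated to a generating set `S`. -/
noncomputable def wordMetric {G : Type*} [Group G] (S : Set G) (g h : G) : ℝ :=
  (wordLength S (h⁻¹ * g) : ℝ)

/-- A group is SB-generated if it is generated by a strongly bounded subset. -/
def SBGenerated (G : Type*) [Group G] : Prop :=
  ∃ S : Set G, StronglyBounded S ∧ Subgroup.closure S = ⊤

/-- A group has uncountable cofinality if it is not the union of a strictly
increasing sequence of (necessarily proper) subgroups indexed by `ℕ`. -/
def UncountableCofinality (G : Type*) [Group G] : Prop :=
  ¬ ∃ H : ℕ → Subgroup G, StrictMono H ∧ ∀ g : G, ∃ n, g ∈ H n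

theorem fg_to_sb {G : Type*} [Group G] (h : Group.FG G) : SBGenerated G := by
  obtain ⟨S, hS, hfin⟩ := Group.fg_iff.mp h
  refine ⟨S, ?_, hS⟩
  intro d _
  obtain ⟨D, hD⟩ := ((hfin.prod hfin).image (fun p => d p.1 p.2)).bddAbove
  exact ⟨D, fun a ha b hb => hD ⟨⟨a, b⟩, ⟨ha, hb⟩, rfl⟩⟩

theorem sb_to_uc {G : Type*} [Group G] (h : SBGenerated G) : UncountableCofinality G := by
  rintro ⟨H, hmono, hcov⟩
  classical
  obtain ⟨S, hSB, hScl⟩ := h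
  set ρ : G → ℕ := fun g => sInf {n | g ∈ H n} with hρ
  have hmem : ∀ g, g ∈ H (ρ g) := fun g => Nat.sInf_mem (hcov g)
  have hle : ∀ g n, g ∈ H n → ρ g ≤ n := fun g n hg => Nat.sInf_le hg
  have hρ1 : ρ 1 = 0 := Nat.le_zero.mp (hle 1 0 (one_mem _))
  have hρinv : ∀ g, ρ g⁻¹ = ρ g := by
    intro g
    apply le_antisymm
    · exact hle _ _ (inv_mem (hmem g))
    · exact hle _ _ (by simpa using inv_mem (hmem g⁻¹))
  have hρmul : ∀ a b, ρ (a * b) ≤ ρ a + ρ b := by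
    intro a b
    refine hle _ _ (mul_mem ?_ ?_)
    · exact hmono.monotone (Nat.le_add_right _ _) (hmem a)
    · exact hmono.monotone (Nat.le_add_left _ _) (hmem b)
  set d : G → G → ℝ := fun x y => (if x = y then 0 else 1) + (ρ (x⁻¹ * y) : ℝ) with hd
  have hdmet : IsLeftInvMetric d := by
    refine ⟨?_, ?_, ?_, ?_⟩
    · intro x y
      constructor
      · intro h0
        by_contra hne
        simp only [hd, if_neg hne] at h0
        have : (0:ℝ) < 1 + (ρ (x⁻¹ * y) : ℝ) := by positivity
        linarith
      · rintro rfl; simp [hd, hρ1]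
    · intro x y
      have : ρ (x⁻¹ * y) = ρ (y⁻¹ * x) := by
        rw [← hρinv (x⁻¹ * y)]; simp [mul_inv_rev]
      simp [hd, this, eq_comm]
    · intro x y z
      have h1 : (ρ (x⁻¹ * z) : ℝ) ≤ (ρ (x⁻¹ * y) : ℝ) + (ρ (y⁻¹ * z) : ℝ) := by
        have : x⁻¹ * z = (x⁻¹ * y) * (y⁻¹ * z) := by group
        rw [this]
        exact_mod_cast hρmul _ _
      have h2 : (if x = z then (0:ℝ) else 1) ≤
          (if x = y then (0:ℝ) else 1) + (if y = z then (0:ℝ) else 1) := by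
        have i1 : (0:ℝ) ≤ (if x = y then (0:ℝ) else 1) := by split <;> norm_num
        have i2 : (0:ℝ) ≤ (if y = z then (0:ℝ) else 1) := by split <;> norm_num
        by_cases hxz : x = z
        · rw [if_pos hxz]; linarith
        · rw [if_neg hxz]
          by_cases hxy : x = y
          · rw [if_pos hxy, if_neg (fun h => hxz (hxy.trans h))]; linarith
          · rw [if_neg hxy]; linarith
      simp only [hd]; linarith
    · intro k x y; simp [hd, mul_inv_rev, mul_assoc]
  obtain ⟨D, hD⟩ := hSB d hdmet
  rcases Set.eq_empty_or_nonempty S with rfl | ⟨s₀, hs₀⟩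
  · have htriv : ∀ g : G, g = 1 := by
      intro g
      have : g ∈ Subgroup.closure (∅ : Set G) := by rw [hScl]; trivial
      simpa [Subgroup.closure_empty] using this
    have : H 0 = H 1 := by
      ext g; simp [htriv g, one_mem]
    exact (hmono Nat.zero_lt_one).ne this
  · set N : ℕ := max ⌈D⌉₊ (ρ s₀) with hN
    have hsub : S ⊆ (H N : Set G) := by
      intro s hs
      have hds : d s₀ s ≤ D := hD s₀ hs₀ s hs
      have hρs : (ρ (s₀⁻¹ * s) : ℝ) ≤ D := by
        have : (0:ℝ) ≤ (if s₀ = s then (0:ℝ) else 1) := by split <;> norm_num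
        simp only [hd] at hds; linarith
      have hρn : ρ (s₀⁻¹ * s) ≤ ⌈D⌉₊ := by
        have := hρs.trans (Nat.le_ceil D)
        exact_mod_cast this
      have h1 : s₀⁻¹ * s ∈ H N := hmono.monotone (le_max_left _ _) <|
        hmono.monotone hρn (hmem _)
      have h2 : s₀ ∈ H N := hmono.monotone (le_max_right _ _) (hmem s₀)
      have := mul_mem h2 h1
      simpa using this
    have htop : H N = ⊤ := top_le_iff.mp (hScl ▸ (Subgroup.closure_le _).mpr hsub)
    have := hmono (Nat.lt_succ_self N)
    rw [htop] at this
    exact not_top_lt this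

theorem uc_to_fg {G : Type*} [Group G] [Countable G] (h : UncountableCofinality G) :
    Group.FG G := by
  by_contra hfg
  obtain ⟨e, he⟩ := exists_surjective_nat G
  set K : ℕ → Subgroup G := fun n => Subgroup.closure (e '' Set.Iic n) with hK
  have hKmono : Monotone K := fun a b hab =>
    Subgroup.closure_mono (Set.image_mono (Set.Iic_subset_Iic.mpr hab))
  have hKne : ∀ n, K n ≠ ⊤ := by
    intro n htop
    exact hfg (Group.fg_iff.mpr ⟨e '' Set.Iic n, htop, (Set.finite_Iic n).image e⟩)
  have hch : ∀ n, ∃ m, e m ∉ K n := by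
    intro n
    by_contra hc
    push_neg at hc
    refine hKne n ((Subgroup.eq_top_iff' _).mpr fun g => ?_)
    obtain ⟨m, rfl⟩ := he g
    exact hc m
  choose m hm using hch
  set f : ℕ → ℕ := fun n => Nat.rec 0 (fun k fk => max (fk + 1) (m fk)) n with hf
  have hfsucc : ∀ n, f (n + 1) = max (f n + 1) (m (f n)) := fun n => rfl
  have hfmono : ∀ n, f n < f (n + 1) := fun n =>
    lt_of_lt_of_le (Nat.lt_succ_self _) (by rw [hfsucc]; exact le_max_left _ _)
  have hfge : ∀ n, n ≤ f n := by
    intro n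
    induction n with
    | zero => exact Nat.zero_le _
    | succ k ih => exact Nat.succ_le_of_lt (lt_of_le_of_lt ih (hfmono k))
  refine h ⟨fun n => K (f n), strictMono_nat_of_lt_succ fun n => ?_, fun g => ?_⟩
  · refine lt_of_le_of_ne (hKmono (hfmono n).le) fun heq => ?_
    have hmem : e (m (f n)) ∈ K (f (n + 1)) := by
      apply Subgroup.subset_closure
      exact ⟨m (f n), Set.mem_Iic.mpr (by rw [hfsucc]; exact le_max_right _ _), rfl⟩
    rw [← heq] at hmem
    exact hm (f n) hmem
  · obtain ⟨i, rfl⟩ := he g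
    exact ⟨i, hKmono (hfge i) (Subgroup.subset_closure ⟨i, le_refl i, rfl⟩)⟩

theorem stmt16 {G : Type*} [Group G] [Countable G] :
    (Group.FG G ↔ SBGenerated G) ∧ (SBGenerated G ↔ UncountableCofinality G) := by
  constructor
  · exact ⟨fg_to_sb, fun h => uc_to_fg (sb_to_uc h)⟩
  · exact ⟨sb_to_uc, fun h => fg_to_sb (uc_to_fg h)⟩
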